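/- arXiv:1301.2134 — 7 statements merged into one kernel-verified Lean document; each statement's English description precedes it below -/
import Mathlib

section
/- If a set W of morphisms in a category C admits a calculus of right fractions and C has enough coarse objects relative to W (for every object Y there is a coarse object X and a morphism Y → X in W), then the category of fractions C[W⁻¹] is equivalent to the full subcategory of coarse objects of C. -/
/-!
Fix a localization functor `L : C ⥤ D` for `W`. For coarse `X`, a morphism `L Y ⟶ L X` is a right
fraction `(L s)⁻¹ ≫ L f` with `s ∈ W`, and extending `f` along `s` gives its unique preimage, so
`L` is fully faithful on coarse objects. Enough coarse objects make it essentially surjective,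
since every `Y` becomes isomorphic in `D` to a coarse `X` through the morphism `Y ⟶ X` in `W`.
-/

open CategoryTheory

universe v u

variable {C : Type u} [Category.{v} C]

/-- An object `X` is *coarse* relative to a class of morphisms `W` if every morphism
`x : Y ⟶ X` extends uniquely along every `w : Y ⟶ Z` in `W`. -/
def Coarse (W : MorphismProperty C) (X : C) : Prop :=
  ∀ ⦃Y Z : C⦄ (w : Y ⟶ Z), W w → ∀ x : Y ⟶ X, ∃! y : Z ⟶ X, w ≫ y = x

namespace Coarse

variable {W : MorphismProperty C} {X : C}

lemma hom_ext (hX : Coarse W X) {Y Z : C} {s : Y ⟶ Z} (hs : W s) {f g : Z ⟶ X}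
    (hfg : s ≫ f = s ≫ g) : f = g :=
  (hX s hs (s ≫ g)).unique hfg rfl

variable {D : Type*} [Category D] (L : C ⥤ D) [L.IsLocalization W]
  [W.HasRightCalculusOfFractions]

lemma map_injective (hX : Coarse W X) {Y : C} :
    Function.Injective (L.map : (Y ⟶ X) → (L.obj Y ⟶ L.obj X)) := by
  intro f g hfg
  obtain ⟨Z, s, hs, hsfg⟩ := (MorphismProperty.map_eq_iff_precomp L W f g).1 hfg
  exact hX.hom_ext hs hsfg

lemma map_surjective (hX : Coarse W X) {Y : C} :
    Function.Surjective (L.map : (Y ⟶ X) → (L.obj Y ⟶ L.obj X)) := by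
  intro φ
  obtain ⟨ψ, rfl⟩ := Localization.exists_rightFraction L W φ
  obtain ⟨g, hg, -⟩ := hX ψ.s ψ.hs ψ.f
  have : IsIso (L.map ψ.s) := Localization.inverts L W ψ.s ψ.hs
  refine ⟨g, (cancel_epi (L.map ψ.s)).1 ?_⟩
  rw [← L.map_comp, hg, ψ.map_s_comp_map L (Localization.inverts L W)]

end Coarse

variable {D : Type*} [Category D] (W : MorphismProperty C) (L : C ⥤ D) [L.IsLocalization W]

instance [W.HasRightCalculusOfFractions] : (ObjectProperty.ι (Coarse W) ⋙ L).Faithful :=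
  ⟨fun {_ B} _ _ hfg => ObjectProperty.hom_ext _ (Coarse.map_injective L B.property hfg)⟩

instance [W.HasRightCalculusOfFractions] : (ObjectProperty.ι (Coarse W) ⋙ L).Full :=
  ⟨fun {_ B} φ => by
    obtain ⟨g, hg⟩ := Coarse.map_surjective L B.property φ
    exact ⟨ObjectProperty.homMk g, hg⟩⟩

lemma essSurj_ι_comp_of_enough_coarse (h : ∀ Y : C, ∃ (X : C) (w : Y ⟶ X), W w ∧ Coarse W X) :
    (ObjectProperty.ι (Coarse W) ⋙ L).EssSurj := by
  refine ⟨fun D₀ => ?_⟩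
  have := Localization.essSurj L W
  obtain ⟨X, w, hw, hX⟩ := h (L.objPreimage D₀)
  exact ⟨⟨X, hX⟩, ⟨(Localization.isoOfHom L W w hw).symm ≪≫ L.objObjPreimageIso D₀⟩⟩

/-- If `W` admits a calculus of right fractions and there are enough coarse objects
(for every `Y` there is a coarse `X` and a morphism `Y ⟶ X` in `W`), then the
category of fractions `C[W⁻¹]` is equivalent to the full subcategory of coarse objects. -/
theorem localization_equiv_coarse (W : MorphismProperty C)
    [W.HasRightCalculusOfFractions]
    (h : ∀ Y : C, ∃ (X : C) (w : Y ⟶ X), W w ∧ Coarse W X) :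
    Nonempty (W.Localization ≌ ObjectProperty.FullSubcategory (Coarse W)) := by
  have := essSurj_ι_comp_of_enough_coarse W W.Q h
  have : (ObjectProperty.ι (Coarse W) ⋙ W.Q).IsEquivalence := { }
  exact ⟨(ObjectProperty.ι (Coarse W) ⋙ W.Q).asEquivalence.symm⟩
end

section
/- If a set W of morphisms in a category C admits a calculus of right fractions and C has enough fine objects relative to W (for every object Y there is a fine object X and a morphism X → Y in W), then the category of fractions C[W⁻¹] is equivalent to the full subcategory of fine objects of C. -/
open CategoryTheory

universe v u

variable {C : Type u} [Category.{v} C]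

/-- An object `X` is *fine* relative to a class of morphisms `W` if every morphism
`y : X ⟶ Z` lifts uniquely through every `w : Y ⟶ Z` in `W`. -/
def Fine (W : MorphismProperty C) (X : C) : Prop :=
  ∀ ⦃Y Z : C⦄ (w : Y ⟶ Z), W w → ∀ y : X ⟶ Z, ∃! x : X ⟶ Y, x ≫ w = y

/-!
A right fraction `s⁻¹ f` out of a fine object `X` has `s : X' ⟶ X` split by the lift
`t : X ⟶ X'` of `𝟙 X`, so it equals the honest morphism `t ≫ f`; likewise two morphisms out of
`X` identified in the localization agree after precomposing with some `s ∈ W`, hence agree.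
Thus any localization functor is fully faithful on fine objects, and it is essentially
surjective on them because every object receives a morphism in `W` from a fine one.
-/

namespace Fine

variable {W : MorphismProperty C} {X : C}

lemma exists_section (hX : Fine W X) {X' : C} {s : X' ⟶ X} (hs : W s) :
    ∃ t : X ⟶ X', t ≫ s = 𝟙 X :=
  (hX s hs (𝟙 X)).exists

variable {D : Type*} [Category D] (L : C ⥤ D) [L.IsLocalization W]

lemma essSurj_ι_comp_of_enough (h : ∀ Y : C, ∃ (X : C) (w : X ⟶ Y), W w ∧ Fine W X) :
    (ObjectProperty.ι (Fine W) ⋙ L).EssSurj where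
  mem_essImage Z := by
    have := Localization.essSurj L W
    obtain ⟨X, w, hw, hX⟩ := h (L.objPreimage Z)
    exact ⟨⟨X, hX⟩, ⟨Localization.isoOfHom L W w hw ≪≫ L.objObjPreimageIso Z⟩⟩

variable [W.HasRightCalculusOfFractions]

lemma map_injective (hX : Fine W X) (Y : C) :
    Function.Injective (L.map : (X ⟶ Y) → (L.obj X ⟶ L.obj Y)) := by
  intro f g hfg
  obtain ⟨X', s, hs, fac⟩ := (MorphismProperty.map_eq_iff_precomp L W f g).1 hfg
  obtain ⟨t, ht⟩ := hX.exists_section hs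
  simpa [reassoc_of% ht] using t ≫= fac

lemma map_surjective (hX : Fine W X) (Y : C) :
    Function.Surjective (L.map : (X ⟶ Y) → (L.obj X ⟶ L.obj Y)) := by
  intro φ
  obtain ⟨ψ, rfl⟩ := Localization.exists_rightFraction L W φ
  obtain ⟨t, ht⟩ := hX.exists_section ψ.hs
  have : IsIso (L.map ψ.s) := Localization.inverts L W ψ.s ψ.hs
  have hLt : L.map t = inv (L.map ψ.s) :=
    IsIso.eq_inv_of_inv_hom_id (by rw [← L.map_comp, ht, L.map_id])
  exact ⟨t ≫ ψ.f, by rw [L.map_comp, hLt, ← ψ.map_s_comp_map, IsIso.inv_hom_id_assoc]⟩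

variable (W)

lemma faithful_ι_comp :
    (ObjectProperty.ι (Fine W) ⋙ L).Faithful where
  map_injective {X _} _ _ hfg := InducedCategory.hom_ext (X.property.map_injective L _ hfg)

lemma full_ι_comp :
    (ObjectProperty.ι (Fine W) ⋙ L).Full where
  map_surjective {X _} φ :=
    let ⟨f, hf⟩ := X.property.map_surjective L _ φ
    ⟨InducedCategory.homMk f, hf⟩

end Fine

/-- If `W` admits a calculus of right fractions and there are enough fine objects
(for every `Y` there is a fine `X` and a morphism `X ⟶ Y` in `W`), then the category
of fractions `C[W⁻¹]` is equivalent to the full subcategory of fine objects. -/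
theorem localization_equiv_fine (W : MorphismProperty C)
    [W.HasRightCalculusOfFractions]
    (h : ∀ Y : C, ∃ (X : C) (w : X ⟶ Y), W w ∧ Fine W X) :
    Nonempty (W.Localization ≌ ObjectProperty.FullSubcategory (Fine W)) := by
  have := Fine.faithful_ι_comp W W.Q
  have := Fine.full_ι_comp W W.Q
  have := Fine.essSurj_ι_comp_of_enough W.Q h
  have : (ObjectProperty.ι (Fine W) ⋙ W.Q).IsEquivalence := { }
  exact ⟨(ObjectProperty.ι (Fine W) ⋙ W.Q).asEquivalence.symm⟩
end

section
/- In a category C with enough coarse objects relative to a class W of morphisms admitting a calculus of right fractions, the full subcategory of coarse objects is reflective: the inclusion of coarse objects into C has a left adjoint. -/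
open CategoryTheory

universe v u

variable {C : Type u} [Category.{v} C]

/-!
A morphism `w : Y ⟶ X` in `W` with `X` coarse is a reflection arrow: by coarseness of the
target, precomposition with `w` identifies maps from `X` into coarse objects with maps from `Y`,
so `X` corepresents `Hom(Y, -)` on coarse objects. Choosing such a `w` for every `Y` gives the
left adjoint.
-/

theorem coarse_eq_isLocal (W : MorphismProperty C) : Coarse W = W.isLocal := by
  ext X
  simp only [Coarse, MorphismProperty.isLocal_iff, Function.bijective_iff_existsUnique]

namespace CategoryTheory.ObjectProperty

variable {P : ObjectProperty C}

noncomputable def corepresentableByOfIsLocal {X Y : C} {f : Y ⟶ X} (hf : P.isLocal f)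
    (hX : P X) : (P.ι ⋙ coyoneda.obj (Opposite.op Y)).CorepresentableBy ⟨X, hX⟩ where
  homEquiv {A} := (fullyFaithfulι P).homEquiv.trans (hf.homEquiv A.obj A.property)

theorem isRightAdjoint_ι_of_exists_isLocal
    (h : ∀ Y : C, ∃ (X : C) (f : Y ⟶ X), P.isLocal f ∧ P X) : P.ι.IsRightAdjoint := by
  rw [Functor.isRightAdjoint_iff_leftAdjointObjIsDefined_eq_top, eq_top_iff]
  intro Y _
  obtain ⟨X, f, hf, hX⟩ := h Y
  exact (corepresentableByOfIsLocal hf hX).isCorepresentable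

end CategoryTheory.ObjectProperty

theorem coarse_reflective_general (W : MorphismProperty C)
    (h : ∀ Y : C, ∃ (X : C) (w : Y ⟶ X), W w ∧ Coarse W X) :
    ∃ L : C ⥤ ObjectProperty.FullSubcategory (Coarse W),
      Nonempty (L ⊣ ObjectProperty.ι (Coarse W)) := by
  have : (ObjectProperty.ι (Coarse W)).IsRightAdjoint := by
    refine ObjectProperty.isRightAdjoint_ι_of_exists_isLocal fun Y ↦ ?_
    obtain ⟨X, w, hw, hX⟩ := h Y
    rw [coarse_eq_isLocal] at hX ⊢
    exact ⟨X, w, W.le_isLocal_isLocal w hw, hX⟩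
  exact ⟨_, ⟨Adjunction.ofIsRightAdjoint _⟩⟩

/-- If `W` admits a calculus of right fractions and there are enough coarse objects,
then the full subcategory of coarse objects is reflective: the inclusion has a left
adjoint. -/
theorem coarse_reflective (W : MorphismProperty C)
    [W.HasRightCalculusOfFractions]
    (h : ∀ Y : C, ∃ (X : C) (w : Y ⟶ X), W w ∧ Coarse W X) :
    ∃ L : C ⥤ ObjectProperty.FullSubcategory (Coarse W),
      Nonempty (L ⊣ ObjectProperty.ι (Coarse W)) :=
  coarse_reflective_general W h
end

section
/- Let F : E → B be a fibration (in the sense of Grothendieck) such that every fibre has limits of shape D which are preserved by the reindexing functors, and suppose B has limits of shape D. Then the total category E has limits of shape D and F preserves them. -/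
/-!
A limit of `K : D ⥤ E` is built over `L = lim (K ⋙ F)`: pull each `K d` back to the fibre over
`L` along the limit leg `L ⟶ F (K d)` by a prone lift, take the limit of the resulting diagram in
that fibre, and compose its legs with the prone lifts. A cone `s` over `K` induces a base map
`m : F s.pt ⟶ L`; reindexing along `m` preserves the fibre limit, and since the composite lifts
are prone, `s` lifts uniquely to a cone over the reindexed diagram in the fibre over `F s.pt`, so
it factors uniquely through the candidate. Its image under `F` is the limit cone of `K ⋙ F`
up to the identification `F (lim) = L`.
-/

open CategoryTheory CategoryTheory.Limits

universe v₁ u₁ v₂ u₂ v₃ u₃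

variable {B : Type u₁} [Category.{v₁} B] {E : Type u₂} [Category.{v₂} E]

/-- A morphism is prone (cartesian) relative to a functor `F`. -/
def Prone (F : E ⥤ B) {X Y : E} (f : X ⟶ Y) : Prop :=
  ∀ ⦃Z : E⦄ (g : Z ⟶ Y) (h : F.obj Z ⟶ F.obj X),
    F.map g = h ≫ F.map f → ∃! k : Z ⟶ X, k ≫ f = g ∧ F.map k = h

/-- The fibre of `F : E ⥤ B` over `X : B`. -/
structure Fib (F : E ⥤ B) (X : B) where
  obj : E
  eq : F.obj obj = X

/-- The fibre category: morphisms are the morphisms of `E` lying over the identity. -/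
instance (F : E ⥤ B) (X : B) : Category (Fib F X) where
  Hom A C := { g : A.obj ⟶ C.obj // F.map g = eqToHom (A.eq.trans C.eq.symm) }
  id A := ⟨𝟙 A.obj, by simp⟩
  comp f g := ⟨f.1 ≫ g.1, by simp [f.2, g.2]⟩
  id_comp f := Subtype.ext (by simp)
  comp_id f := Subtype.ext (by simp)
  assoc f g h := Subtype.ext (by simp)

/-- A morphism of `E` between objects of fibres lies over `f : Y ⟶ X` in `B`. -/
def IsOver (F : E ⥤ B) {X Y : B} (f : Y ⟶ X) {A : Fib F Y} {A' : Fib F X}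
    (g : A.obj ⟶ A'.obj) : Prop :=
  F.map g = eqToHom A.eq ≫ f ≫ eqToHom A'.eq.symm

/-- `F` is a (Grothendieck) fibration: every morphism of `B` into the image of an object
admits a prone lift. -/
def IsFibration (F : E ⥤ B) : Prop :=
  ∀ (X : B) (E₀ : Fib F X) (Y : B) (f : Y ⟶ X),
    ∃ (E₁ : Fib F Y) (g : E₁.obj ⟶ E₀.obj), Prone F g ∧ IsOver F f g

theorem Prone.comp {F : E ⥤ B} {X Y Z : E} {g : X ⟶ Y} {g' : Y ⟶ Z}
    (hg : Prone F g) (hg' : Prone F g') : Prone F (g ≫ g') := by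
  intro W f h hh
  obtain ⟨k', ⟨hk'g', hk'F⟩, uniq'⟩ := hg' f (h ≫ F.map g) (by simpa using hh)
  obtain ⟨k, ⟨hkg, hkF⟩, uniq⟩ := hg k' h hk'F
  refine ⟨k, ⟨by rw [← Category.assoc, hkg, hk'g'], hkF⟩, fun k₁ ⟨hk₁, hk₁F⟩ => uniq k₁ ⟨?_, hk₁F⟩⟩
  exact uniq' _ ⟨by simpa using hk₁, by simp [hk₁F]⟩

namespace Fib

variable {F : E ⥤ B} {X : B}

@[ext]
lemma hom_ext {A A' : Fib F X} {f g : A ⟶ A'} (h : f.1 = g.1) : f = g := Subtype.ext h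

@[simp]
lemma id_val (A : Fib F X) : (𝟙 A : A ⟶ A).1 = 𝟙 A.obj := rfl

@[simp]
lemma comp_val {A A' A'' : Fib F X} (f : A ⟶ A') (g : A' ⟶ A'') : (f ≫ g).1 = f.1 ≫ g.1 := rfl

lemma map_val {A A' : Fib F X} (f : A ⟶ A') :
    F.map f.1 = eqToHom (A.eq.trans A'.eq.symm) := f.2

-- Reducible, so that `simp` sees `(G ⋙ Fib.forget F X).obj d` as `(G.obj d).obj`.
variable (F X) in
abbrev forget : Fib F X ⥤ E where
  obj A := A.obj
  map f := f.1

end Fib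

namespace Prone

variable {F : E ⥤ B} {Y : B} {A C : Fib F Y} {Q : E} {γ : C.obj ⟶ Q}

lemma fib_hom_ext (hγ : Prone F γ) {f f' : A ⟶ C} (h : f.1 ≫ γ = f'.1 ≫ γ) : f = f' :=
  Fib.hom_ext <| (hγ (f.1 ≫ γ) (eqToHom (A.eq.trans C.eq.symm)) (by simp [Fib.map_val])).unique
    ⟨rfl, Fib.map_val f⟩ ⟨h.symm, Fib.map_val f'⟩

noncomputable def fibLift (hγ : Prone F γ) (u : A.obj ⟶ Q)
    (hu : F.map u = eqToHom (A.eq.trans C.eq.symm) ≫ F.map γ) : A ⟶ C :=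
  ⟨(hγ u _ hu).exists.choose, (hγ u _ hu).exists.choose_spec.2⟩

@[simp]
lemma fibLift_val_comp (hγ : Prone F γ) (u : A.obj ⟶ Q)
    (hu : F.map u = eqToHom (A.eq.trans C.eq.symm) ≫ F.map γ) : (hγ.fibLift u hu).1 ≫ γ = u :=
  (hγ u _ hu).exists.choose_spec.1

@[simp]
lemma fibLift_val_comp_assoc (hγ : Prone F γ) (u : A.obj ⟶ Q)
    (hu : F.map u = eqToHom (A.eq.trans C.eq.symm) ≫ F.map γ) {Q' : E} (v : Q ⟶ Q') :
    (hγ.fibLift u hu).1 ≫ γ ≫ v = u ≫ v := by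
  rw [← Category.assoc, fibLift_val_comp]

end Prone

section Reindex

variable {D : Type u₃} [Category.{v₃} D] {F : E ⥤ B} {Y : B} {K : D ⥤ E}

noncomputable def proneDiagram (A : D → Fib F Y) (α : ∀ d, (A d).obj ⟶ K.obj d)
    (hα : ∀ d, Prone F (α d))
    (hαK : ∀ {d d' : D} (h : d ⟶ d'),
      F.map (α d ≫ K.map h) = eqToHom ((A d).eq.trans (A d').eq.symm) ≫ F.map (α d')) :
    D ⥤ Fib F Y where
  obj := A
  map h := (hα _).fibLift (α _ ≫ K.map h) (hαK h)
  map_id d := (hα d).fib_hom_ext (by simp)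
  map_comp h h' := (hα _).fib_hom_ext (by simp)

theorem IsFibration.exists_prone_natTrans (hF : IsFibration F) (b : Cone (K ⋙ F)) :
    ∃ (G : D ⥤ Fib F b.pt) (α : G ⋙ Fib.forget F b.pt ⟶ K),
      (∀ d, Prone F (α.app d)) ∧ ∀ d, F.map (α.app d) = eqToHom (G.obj d).eq ≫ b.π.app d := by
  choose A α hα hαb using fun d => hF _ ⟨K.obj d, rfl⟩ b.pt (b.π.app d)
  replace hαb : ∀ d, F.map (α d) = eqToHom (A d).eq ≫ b.π.app d := by
    simpa [IsOver] using hαb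
  have hαK : ∀ {d d' : D} (h : d ⟶ d'),
      F.map (α d ≫ K.map h) = eqToHom ((A d).eq.trans (A d').eq.symm) ≫ F.map (α d') :=
    fun h => by simp [hαb, ← b.w h]
  exact ⟨proneDiagram A α hα hαK,
    { app := α, naturality _ _ h := Prone.fibLift_val_comp (hα _) _ (hαK h) }, hα, hαb⟩

theorem IsFibration.exists_reindex (hF : IsFibration F) {X : B} (f : Y ⟶ X) (G : D ⥤ Fib F X) :
    ∃ (G' : D ⥤ Fib F Y) (α : G' ⋙ Fib.forget F Y ⟶ G ⋙ Fib.forget F X),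
      (∀ d, Prone F (α.app d)) ∧ ∀ d, IsOver F f (A := G'.obj d) (A' := G.obj d) (α.app d) := by
  let b : Cone ((G ⋙ Fib.forget F X) ⋙ F) :=
    { pt := Y
      π := { app d := f ≫ eqToHom (G.obj d).eq.symm
             naturality _ _ h := by simp [Fib.map_val] } }
  exact hF.exists_prone_natTrans b

-- Reducible, so that the point of the lifted cone is syntactically `s.pt` when rewriting.
noncomputable abbrev liftCone {G : D ⥤ Fib F Y} (α : G ⋙ Fib.forget F Y ⟶ K)
    (hα : ∀ d, Prone F (α.app d)) (s : Cone K) (hs : F.obj s.pt = Y)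
    (hsα : ∀ d, F.map (s.π.app d) = eqToHom (hs.trans (G.obj d).eq.symm) ≫ F.map (α.app d)) :
    Cone G where
  pt := ⟨s.pt, hs⟩
  π :=
    { app d := (hα d).fibLift (C := G.obj d) (s.π.app d) (hsα d)
      naturality _ _ h := (hα _).fib_hom_ext <| by
        have hαh := α.naturality h
        dsimp at hαh
        simp [hαh] }

@[simp]
lemma liftCone_π_app_val_comp {G : D ⥤ Fib F Y} (α : G ⋙ Fib.forget F Y ⟶ K)
    (hα : ∀ d, Prone F (α.app d)) (s : Cone K) (hs : F.obj s.pt = Y)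
    (hsα : ∀ d, F.map (s.π.app d) = eqToHom (hs.trans (G.obj d).eq.symm) ≫ F.map (α.app d))
    (d : D) : ((liftCone α hα s hs hsα).π.app d).1 ≫ α.app d = s.π.app d :=
  Prone.fibLift_val_comp (hα d) _ (hsα d)

end Reindex

def ProneReindexingPreservesLimits (F : E ⥤ B) (D : Type u₃) [Category.{v₃} D] : Prop :=
  ∀ {X Y : B} (f : Y ⟶ X) (G : D ⥤ Fib F X) (G' : D ⥤ Fib F Y)
    (α : ∀ d : D, (G'.obj d).obj ⟶ (G.obj d).obj),
    (∀ d, Prone F (α d)) → (∀ d, IsOver F f (α d)) →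
    (∀ {d d' : D} (h : d ⟶ d'), (G'.map h).1 ≫ α d' = α d ≫ (G.map h).1) →
    ∀ (c : Cone G), IsLimit c →
    ∀ (c' : Cone G') (p : c'.pt.obj ⟶ c.pt.obj),
      Prone F p → IsOver F f p →
      (∀ d, (c'.π.app d).1 ≫ α d = p ≫ (c.π.app d).1) →
      Nonempty (IsLimit c')

section Limits

variable {D : Type u₃} [Category.{v₃} D] {F : E ⥤ B}

theorem exists_isLimit_reindex (hF : IsFibration F) (hpres : ProneReindexingPreservesLimits F D)
    {X Y : B} (f : Y ⟶ X) {G : D ⥤ Fib F X} {c : Cone G} (hc : IsLimit c) :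
    ∃ (G' : D ⥤ Fib F Y) (β : G' ⋙ Fib.forget F Y ⟶ G ⋙ Fib.forget F X) (c' : Cone G')
      (p : c'.pt.obj ⟶ c.pt.obj), (∀ d, Prone F (β.app d)) ∧
      (∀ d, IsOver F f (A := G'.obj d) (A' := G.obj d) (β.app d)) ∧ Prone F p ∧ IsOver F f p ∧
      (∀ d, (c'.π.app d).1 ≫ β.app d = p ≫ (c.π.app d).1) ∧ Nonempty (IsLimit c') := by
  obtain ⟨P, p, hp, hpf⟩ := hF _ c.pt _ f
  obtain ⟨G', β, hβ, hβf⟩ := hF.exists_reindex f G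
  let c' := liftCone β hβ (((Fib.forget F X).mapCone c).extend p) P.eq fun d => by
    unfold IsOver at hpf hβf
    simp [hpf, hβf, Fib.map_val]
  have hc'π : ∀ d, (c'.π.app d).1 ≫ β.app d = p ≫ (c.π.app d).1 :=
    liftCone_π_app_val_comp β hβ _ _ _
  exact ⟨G', β, c', p, hβ, hβf, hp, hpf, hc'π,
    hpres f G G' β.app hβ hβf (fun h => β.naturality h) c hc c' p hp hpf hc'π⟩

variable {K : D ⥤ E} {b : Cone (K ⋙ F)} {G : D ⥤ Fib F b.pt} {α : G ⋙ Fib.forget F b.pt ⟶ K}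

noncomputable def isLimitMapConePostcompose (hb : IsLimit b)
    (hαb : ∀ d, F.map (α.app d) = eqToHom (G.obj d).eq ≫ b.π.app d) (c : Cone G) :
    IsLimit (F.mapCone ((Cone.postcompose α).obj ((Fib.forget F b.pt).mapCone c))) :=
  hb.ofIsoLimit (Cone.ext (eqToIso c.pt.eq).symm fun d => by simp [hαb, Fib.map_val])

noncomputable def isLimitPostcompose (hF : IsFibration F)
    (hpres : ProneReindexingPreservesLimits F D) (hb : IsLimit b) (hα : ∀ d, Prone F (α.app d))
    (hαb : ∀ d, F.map (α.app d) = eqToHom (G.obj d).eq ≫ b.π.app d) {c : Cone G}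
    (hc : IsLimit c) : IsLimit ((Cone.postcompose α).obj ((Fib.forget F b.pt).mapCone c)) := by
  refine IsLimit.ofExistsUnique fun s => ?_
  let m := hb.lift (F.mapCone s)
  have hm : ∀ d, m ≫ b.π.app d = F.map (s.π.app d) := hb.fac (F.mapCone s)
  obtain ⟨G', β, c', p, hβ, hβm, hp, hpm, hc'π, ⟨hc'⟩⟩ := exists_isLimit_reindex hF hpres m hc
  unfold IsOver at hβm hpm
  have hβα : ∀ d, Prone F ((β ≫ α).app d) := fun d => (hβ d).comp (hα d)
  let sσ := liftCone (β ≫ α) hβα s rfl fun d => by simp [hβm, hαb, hm]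
  have hsσπ : ∀ d, (sσ.π.app d).1 ≫ β.app d ≫ α.app d = s.π.app d :=
    liftCone_π_app_val_comp (β ≫ α) hβα _ _ _
  refine ⟨(hc'.lift sσ).1 ≫ p, fun d => ?_, fun u hu => ?_⟩
  · have ht := congrArg Subtype.val (hc'.fac sσ d)
    dsimp at ht
    change ((hc'.lift sσ).1 ≫ p) ≫ (c.π.app d).1 ≫ α.app d = s.π.app d
    rw [Category.assoc, reassoc_of% (hc'π d).symm, reassoc_of% ht, hsσπ]
  · have hum : F.map u ≫ eqToHom c.pt.eq = m := hb.hom_ext fun d => by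
      rw [Category.assoc, hm, ← hu d]
      simp [hαb, Fib.map_val]
    let u' : (⟨s.pt, rfl⟩ : Fib F (F.obj s.pt)) ⟶ c'.pt := hp.fibLift u <| by simp [hpm, ← hum]
    have hu' : u' = hc'.lift sσ := hc'.uniq sσ u' fun d => (hβα d).fib_hom_ext <| by
      dsimp
      rw [hsσπ, Category.assoc, reassoc_of% hc'π, Prone.fibLift_val_comp_assoc]
      exact hu d
    rw [← hu', Prone.fibLift_val_comp]

end Limits

theorem exists_isLimit_isLimit_mapCone {D : Type u₃} [Category.{v₃} D] {F : E ⥤ B}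
    (hF : IsFibration F) (hpres : ProneReindexingPreservesLimits F D) [HasLimitsOfShape D B]
    [∀ X : B, HasLimitsOfShape D (Fib F X)] (K : D ⥤ E) :
    ∃ c : Cone K, Nonempty (IsLimit c) ∧ Nonempty (IsLimit (F.mapCone c)) := by
  obtain ⟨G, α, hα, hαb⟩ := hF.exists_prone_natTrans (limit.cone (K ⋙ F))
  exact ⟨_, ⟨isLimitPostcompose hF hpres (limit.isLimit _) hα hαb (limit.isLimit G)⟩,
    ⟨isLimitMapConePostcompose (limit.isLimit _) hαb _⟩⟩

/-- Lifting limits along a fibration: if a fibration `F : E ⥤ B` has fibrewise limits of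
shape `D` preserved by reindexing (formulated via prone lifts), and `B` has limits of
shape `D`, then `E` has limits of shape `D` and `F` preserves them. -/
theorem fibration_lifts_limits {D : Type u₃} [Category.{v₃} D] (F : E ⥤ B)
    (hfib : IsFibration F)
    [HasLimitsOfShape D B]
    [∀ X : B, HasLimitsOfShape D (Fib F X)]
    (hpres : ∀ {X Y : B} (f : Y ⟶ X) (G : D ⥤ Fib F X) (G' : D ⥤ Fib F Y)
      (α : ∀ d : D, (G'.obj d).obj ⟶ (G.obj d).obj),
      (∀ d, Prone F (α d)) → (∀ d, IsOver F f (α d)) →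
      (∀ {d d' : D} (h : d ⟶ d'), (G'.map h).1 ≫ α d' = α d ≫ (G.map h).1) →
      ∀ (c : Cone G), IsLimit c →
      ∀ (c' : Cone G') (p : c'.pt.obj ⟶ c.pt.obj),
        Prone F p → IsOver F f p →
        (∀ d, (c'.π.app d).1 ≫ α d = p ≫ (c.π.app d).1) →
        Nonempty (IsLimit c')) :
    HasLimitsOfShape D E ∧ Nonempty (PreservesLimitsOfShape D F) := by
  choose c hc hFc using exists_isLimit_isLimit_mapCone (D := D) hfib hpres
  exact ⟨⟨fun K => ⟨⟨⟨c K, (hc K).some⟩⟩⟩⟩,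
    ⟨⟨fun {K} => preservesLimit_of_preserves_limit_cone (hc K).some (hFc K).some⟩⟩⟩
end

section
/- A fibred locale F : F → B (over a regular category B) is separated if and only if for every regular epimorphism e in B, the composite ∃_e ∘ F_e is naturally isomorphic to the identity functor on the fibre over the codomain of e. -/
open CategoryTheory CategoryTheory.Limits

universe w v u

/-- A fibred locale over a base category `B`, presented as an indexed preorder:
a preordered fibre over each object, reindexing, indexed coproducts `ex` left adjoint
to reindexing, fibrewise finite products (top and binary meets) preserved by
reindexing, the Beck–Chevalley condition over pullback squares, and the Frobenius
condition.  (The total functor of such a fibration is automatically faithful.) -/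
structure FibredLocale (B : Type u) [Category.{v} B] where
  Fib : B → Type w
  le : ∀ {X : B}, Fib X → Fib X → Prop
  le_refl : ∀ {X : B} (U : Fib X), le U U
  le_trans : ∀ {X : B} {U V W : Fib X}, le U V → le V W → le U W
  reind : ∀ {X Y : B}, (X ⟶ Y) → Fib Y → Fib X
  reind_mono : ∀ {X Y : B} (f : X ⟶ Y) {U V : Fib Y}, le U V → le (reind f U) (reind f V)
  reind_id_le : ∀ {X : B} (U : Fib X), le (reind (𝟙 X) U) U
  le_reind_id : ∀ {X : B} (U : Fib X), le U (reind (𝟙 X) U)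
  reind_comp_le : ∀ {X Y Z : B} (f : X ⟶ Y) (g : Y ⟶ Z) (U : Fib Z),
    le (reind (f ≫ g) U) (reind f (reind g U))
  le_reind_comp : ∀ {X Y Z : B} (f : X ⟶ Y) (g : Y ⟶ Z) (U : Fib Z),
    le (reind f (reind g U)) (reind (f ≫ g) U)
  ex : ∀ {X Y : B}, (X ⟶ Y) → Fib X → Fib Y
  ex_adj : ∀ {X Y : B} (f : X ⟶ Y) (U : Fib X) (V : Fib Y),
    le (ex f U) V ↔ le U (reind f V)
  top : ∀ X : B, Fib X
  le_top : ∀ {X : B} (U : Fib X), le U (top X)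
  inf : ∀ {X : B}, Fib X → Fib X → Fib X
  inf_le_left : ∀ {X : B} (U V : Fib X), le (inf U V) U
  inf_le_right : ∀ {X : B} (U V : Fib X), le (inf U V) V
  le_inf : ∀ {X : B} {U V W : Fib X}, le W U → le W V → le W (inf U V)
  le_reind_top : ∀ {X Y : B} (f : X ⟶ Y), le (top X) (reind f (top Y))
  le_reind_inf : ∀ {X Y : B} (f : X ⟶ Y) (U V : Fib Y),
    le (inf (reind f U) (reind f V)) (reind f (inf U V))
  beck : ∀ {P X Y Z : B} (fst : P ⟶ X) (snd : P ⟶ Y) (g : X ⟶ Z) (h : Y ⟶ Z),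
    IsPullback fst snd g h → ∀ U : Fib X,
      le (ex snd (reind fst U)) (reind h (ex g U)) ∧
      le (reind h (ex g U)) (ex snd (reind fst U))
  frobenius_le : ∀ {X Y : B} (f : X ⟶ Y) (U : Fib X) (V : Fib Y),
    le (ex f (inf U (reind f V))) (inf (ex f U) V)
  le_frobenius : ∀ {X Y : B} (f : X ⟶ Y) (U : Fib X) (V : Fib Y),
    le (inf (ex f U) V) (ex f (inf U (reind f V)))

namespace FibredLocale

variable {B : Type u} [Category.{v} B] (L : FibredLocale.{w} B)

/-- Isomorphism in a fibre of a fibred locale: mutual inequality. -/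
def equiv {X : B} (U V : L.Fib X) : Prop := L.le U V ∧ L.le V U

/-- A fibred locale is separated if `∃_e ⊤ ≅ ⊤` for every regular epimorphism `e`. -/
def Separated : Prop :=
  ∀ {X Y : B} (e : X ⟶ Y), Nonempty (RegularEpi e) → L.equiv (L.ex e (L.top X)) (L.top Y)

end FibredLocale

/-!
The counit always gives `∃_e e* V ≤ V`. For the converse inequality, Frobenius reciprocity
gives `∃_e ⊤ ∧ V ≤ ∃_e (⊤ ∧ e* V) ≤ ∃_e e* V`, so `∃_e ⊤ ≅ ⊤` suffices; and taking `V = ⊤`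
recovers `∃_e ⊤ ≅ ∃_e e* ⊤ ≅ ⊤`. This is an equivalence for each single morphism `e`.
-/

namespace FibredLocale

variable {B : Type u} [Category.{v} B] (L : FibredLocale.{w} B)

theorem ex_mono {X Y : B} (f : X ⟶ Y) {U U' : L.Fib X} (h : L.le U U') :
    L.le (L.ex f U) (L.ex f U') :=
  (L.ex_adj f U _).mpr (L.le_trans h ((L.ex_adj f U' _).mp (L.le_refl _)))

theorem ex_reind_le {X Y : B} (f : X ⟶ Y) (V : L.Fib Y) : L.le (L.ex f (L.reind f V)) V :=
  (L.ex_adj f _ V).mpr (L.le_refl _)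

theorem inf_ex_top_le_ex_reind {X Y : B} (f : X ⟶ Y) (V : L.Fib Y) :
    L.le (L.inf (L.ex f (L.top X)) V) (L.ex f (L.reind f V)) :=
  L.le_trans (L.le_frobenius f (L.top X) V) (L.ex_mono f (L.inf_le_right _ _))

theorem ex_top_equiv_top_iff {X Y : B} (f : X ⟶ Y) :
    L.equiv (L.ex f (L.top X)) (L.top Y) ↔
      ∀ V : L.Fib Y, L.equiv (L.ex f (L.reind f V)) V := by
  constructor
  · rintro ⟨-, top_le_ex_top⟩ V
    have le_inf_ex_top : L.le V (L.inf (L.ex f (L.top X)) V) :=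
      L.le_inf (L.le_trans (L.le_top V) top_le_ex_top) (L.le_refl V)
    exact ⟨L.ex_reind_le f V, L.le_trans le_inf_ex_top (L.inf_ex_top_le_ex_reind f V)⟩
  · intro h
    exact ⟨L.le_top _, L.le_trans (h (L.top Y)).2 (L.ex_mono f (L.le_top _))⟩

end FibredLocale

theorem separated_iff_ex_reind_iso_id_general {B : Type u} [Category.{v} B]
    (L : FibredLocale.{w} B) :
    L.Separated ↔
      ∀ {X Y : B} (e : X ⟶ Y), Nonempty (RegularEpi e) →
        ∀ V : L.Fib Y, L.equiv (L.ex e (L.reind e V)) V :=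
  ⟨fun hsep _ _ e he => (L.ex_top_equiv_top_iff e).mp (hsep e he),
    fun h _ _ e he => (L.ex_top_equiv_top_iff e).mpr (h e he)⟩

/-- A fibred locale over a regular category is separated iff `∃_e ∘ e⁻¹` is (pointwise)
isomorphic to the identity on the fibre over the codomain, for every regular epi `e`. -/
theorem separated_iff_ex_reind_iso_id {B : Type u} [Category.{v} B]
    [HasFiniteLimits B]
    (hcoeq : ∀ {X Y : B} (f : X ⟶ Y),
      HasCoequalizer (pullback.fst f f) (pullback.snd f f))
    (hstab : ∀ {X Y Z : B} (f : X ⟶ Y) (g : Z ⟶ Y),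
      Nonempty (RegularEpi f) → Nonempty (RegularEpi (pullback.snd f g)))
    (L : FibredLocale.{w} B) :
    L.Separated ↔
      ∀ {X Y : B} (e : X ⟶ Y), Nonempty (RegularEpi e) →
        ∀ V : L.Fib Y, L.equiv (L.ex e (L.reind e V)) V :=
  separated_iff_ex_reind_iso_id_general L
end

section
/- Let A be an order partial combinatory algebra and φ a combinatory complete external filter on A. Define on downsets U, V of A: U ≪ V iff the downset U ⇒ V = {a ∈ A | ∀b ∈ U, ab is defined and ab ∈ V} belongs to φ. Then ≪ is a preorder on downsets of A; moreover the preorder has finite meets given by pairing and ⇒ is a Heyting implication with respect to this meet: W ≪ (U ⇒ V) iff (W ∧ U) ≪ V, where W ∧ U is defined via a pairing combinator. -/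
variable {A : Type*} [Preorder A]

/-- The partial combinatory functions of a partial applicative structure `(A, ap)`. -/
inductive PCF {α : Type*} (ap : α → α → Option α) : (n : ℕ) → ((Fin n → α) → Option α) → Prop
  | proj (n : ℕ) (i : Fin n) : PCF ap n fun x => some (x i)
  | app {n : ℕ} {f g : (Fin n → α) → Option α} :
      PCF ap n f → PCF ap n g →
      PCF ap n fun x => (f x).bind fun a => (g x).bind fun b => ap a b

/-- Iterated application `r x₁ ⋯ xₙ`. -/
def apTuple {α : Type*} (ap : α → α → Option α) (r : α) {n : ℕ} (x : Fin n → α) :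
    Option α :=
  (List.ofFn x).foldlM ap r

/-- The application is monotone: if `x ≤ x'`, `y ≤ y'` and `x'y'` is defined, then
`xy` is defined and `xy ≤ x'y'`. -/
def MonotoneAp (ap : A → A → Option A) : Prop :=
  ∀ x x' y y' z' : A, x ≤ x' → y ≤ y' → ap x' y' = some z' →
    ∃ z : A, ap x y = some z ∧ z ≤ z'

/-- Downward closed subsets. -/
def IsDownset (U : Set A) : Prop := ∀ ⦃a b : A⦄, a ≤ b → b ∈ U → a ∈ U

/-- Application of downsets: `U·V = {z | ∃ x ∈ U, y ∈ V, xy defined, z ≤ xy}`. -/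
def appSet (ap : A → A → Option A) (U V : Set A) : Set A :=
  {z | ∃ x ∈ U, ∃ y ∈ V, ∃ c, ap x y = some c ∧ z ≤ c}

/-- The implication of downsets: `U ⇒ V = {a | ∀ b ∈ U, ab defined and ab ∈ V}`. -/
def impSet (ap : A → A → Option A) (U V : Set A) : Set A :=
  {a | ∀ b ∈ U, ∃ c, ap a b = some c ∧ c ∈ V}

/-- The set `[f]` of realizers of an `(n+1)`-ary partial function, in the ordered weak
sense. -/
def OrdRealizers (ap : A → A → Option A) {n : ℕ}
    (f : (Fin (n + 1) → A) → Option A) : Set A :=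
  {r | (∀ x : Fin n → A, (apTuple ap r x).isSome) ∧
       ∀ (x : Fin (n + 1) → A) (v : A), f x = some v →
         ∃ w, apTuple ap r x = some w ∧ w ≤ v}

/-- An external filter: a collection of downsets, upward closed under inclusion (among
downsets) and closed under application. -/
def ExternalFilter (ap : A → A → Option A) (φ : Set (Set A)) : Prop :=
  (∀ U ∈ φ, IsDownset U) ∧
  (∀ U ∈ φ, ∀ V : Set A, IsDownset V → U ⊆ V → V ∈ φ) ∧
  (∀ U ∈ φ, ∀ V ∈ φ, (∀ x ∈ U, ∀ y ∈ V, (ap x y).isSome) → appSet ap U V ∈ φ)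

/-- `φ` is combinatory complete: it contains the set of realizers of every partial
combinatory function. -/
def CombComplete (ap : A → A → Option A) (φ : Set (Set A)) : Prop :=
  ∀ (n : ℕ) (f : (Fin (n + 1) → A) → Option A), PCF ap (n + 1) f →
    OrdRealizers ap f ∈ φ

/-- The pairing function `(x, y, z) ↦ (z x) y`. -/
def pairFn (ap : A → A → Option A) : (Fin 3 → A) → Option A :=
  fun x => (ap (x 2) (x 0)).bind fun u => ap u (x 1)

/-- The meet of two downsets, given by pairing: `U ∧ V = (p·U)·V` where `p` is the set
of realizers of the pairing function. -/
def meetSet (ap : A → A → Option A) (U V : Set A) : Set A :=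
  appSet ap (appSet ap (OrdRealizers ap (pairFn ap)) U) V

/-!
Every entailment is witnessed by a combinator. If a partial combinatory `f` maps
`X₀ × ⋯ × Xₙ` into a downset `Y`, its realizers `[f] ∈ φ` lie in `X₀ ⇒ ⋯ ⇒ Xₙ ⇒ Y`; applying
them to those `Xᵢ` that lie in `φ` stays in `φ`, and upward closure then puts the remaining
iterated implication in `φ`. Reflexivity and the projections come from `λx. x`, `λxy. x`,
`λxy. y`, transitivity from `λgfa. g (f a)`, pairing from `λpstw. p (s w) (t w)`. An element
of `U ∧ V` acts on `U ⇒ V ⇒ Z` like a Church pair, so `λsm. m s` uncurries, and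
`λtpwu. t (p w u)` curries.
-/

theorem apTuple_cons {α : Type*} (ap : α → α → Option α) (r a : α) {n : ℕ} (x : Fin n → α) :
    apTuple ap r (Fin.cons a x) = (ap r a).bind fun u => apTuple ap u x := by
  simp [apTuple, List.ofFn_succ, List.foldlM_cons]

theorem apTuple_fin_one {α : Type*} (ap : α → α → Option α) (r : α) (x : Fin 1 → α) :
    apTuple ap r x = ap r (x 0) := by
  simp [apTuple, List.foldlM]

section

variable {ap : A → A → Option A} {φ : Set (Set A)}

def impSetN (ap : A → A → Option A) : {n : ℕ} → (Fin n → Set A) → Set A → Set A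
  | 0, _, Y => Y
  | _ + 1, Xs, Y => impSet ap (Xs 0) (impSetN ap (Fin.tail Xs) Y)

theorem isDownset_appSet (U V : Set A) : IsDownset (appSet ap U V) :=
  fun _ _ hab ⟨x, hx, y, hy, c, hc, hbc⟩ => ⟨x, hx, y, hy, c, hc, hab.trans hbc⟩

theorem MonotoneAp.exists_ap_le (hmono : MonotoneAp ap) {x x' y z' : A} (hx : x ≤ x')
    (h : ap x' y = some z') : ∃ z, ap x y = some z ∧ z ≤ z' :=
  hmono x x' y y z' hx le_rfl h

theorem isDownset_impSet (hmono : MonotoneAp ap) (U : Set A) {V : Set A} (hV : IsDownset V) :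
    IsDownset (impSet ap U V) := by
  intro a b hab hb c hc
  obtain ⟨d, hd, hdV⟩ := hb c hc
  obtain ⟨z, hz, hzd⟩ := hmono.exists_ap_le hab hd
  exact ⟨z, hz, hV hzd hdV⟩

theorem isDownset_impSetN (hmono : MonotoneAp ap) {n : ℕ} (Xs : Fin n → Set A) {Y : Set A}
    (hY : IsDownset Y) : IsDownset (impSetN ap Xs Y) := by
  induction n with
  | zero => exact hY
  | succ n ih => exact isDownset_impSet hmono _ (ih _)

theorem appSet_subset_of_subset_impSet {X Y Z : Set A} (hY : IsDownset Y)
    (h : Z ⊆ impSet ap X Y) : appSet ap Z X ⊆ Y := by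
  rintro _ ⟨z, hz, x, hx, c, hc, hle⟩
  obtain ⟨c', hc', hc'Y⟩ := h hz x hx
  rw [hc] at hc'
  cases hc'
  exact hY hle hc'Y

theorem exists_ap_eq_of_mem_ordRealizers {n : ℕ} {f : (Fin (n + 2) → A) → Option A} {r : A}
    (hr : r ∈ OrdRealizers ap f) (a : A) : ∃ u, ap r a = some u := by
  have := hr.1 (Fin.cons a fun _ => a)
  rw [apTuple_cons] at this
  cases h : ap r a <;> simp_all

theorem mem_ordRealizers_of_ap_eq {n : ℕ} {f : (Fin (n + 2) → A) → Option A} {r a u : A}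
    (hr : r ∈ OrdRealizers ap f) (hu : ap r a = some u) :
    u ∈ OrdRealizers ap fun x => f (Fin.cons a x) :=
  ⟨fun x => by simpa [apTuple_cons, hu] using hr.1 (Fin.cons a x),
    fun x v hv => by simpa [apTuple_cons, hu] using hr.2 (Fin.cons a x) v hv⟩

theorem ordRealizers_subset_impSetN {n : ℕ} {f : (Fin (n + 1) → A) → Option A}
    {Xs : Fin (n + 1) → Set A} {Y : Set A} (hY : IsDownset Y)
    (hf : ∀ x : Fin (n + 1) → A, (∀ i, x i ∈ Xs i) → ∃ c, f x = some c ∧ c ∈ Y) :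
    OrdRealizers ap f ⊆ impSetN ap Xs Y := by
  induction n with
  | zero =>
    intro r hr b hb
    obtain ⟨c, hc, hcY⟩ := hf ![b] (Fin.forall_fin_one.2 hb)
    obtain ⟨w, hw, hwc⟩ := hr.2 ![b] c hc
    rw [apTuple_fin_one] at hw
    exact ⟨w, hw, hY hwc hcY⟩
  | succ n ih =>
    intro r hr a ha
    obtain ⟨u, hu⟩ := exists_ap_eq_of_mem_ordRealizers hr a
    refine ⟨u, hu, ih (fun x hx => hf _ ?_) (mem_ordRealizers_of_ap_eq hr hu)⟩
    exact Fin.forall_fin_succ.2 ⟨ha, hx⟩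

theorem mem_of_subset_impSetN (hmono : MonotoneAp ap) (hφ : ExternalFilter ap φ) {n : ℕ}
    {Xs : Fin n → Set A} {Y Z : Set A} (hY : IsDownset Y) (hXs : ∀ i, Xs i ∈ φ) (hZ : Z ∈ φ)
    (h : Z ⊆ impSetN ap Xs Y) : Y ∈ φ := by
  induction n generalizing Z with
  | zero => exact hφ.2.1 Z hZ Y hY h
  | succ n ih =>
    refine ih (fun i => hXs i.succ) (hφ.2.2 Z hZ _ (hXs 0) ?_)
      (appSet_subset_of_subset_impSet (isDownset_impSetN hmono _ hY) h)
    intro z hz x hx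
    obtain ⟨c, hc, -⟩ := h hz x hx
    simp [hc]

theorem ordRealizers_pairFn_subset (U V : Set A) :
    OrdRealizers ap (pairFn ap) ⊆ impSet ap U (impSet ap V (meetSet ap U V)) := by
  intro p hp u hu
  obtain ⟨c, hc⟩ := exists_ap_eq_of_mem_ordRealizers hp u
  refine ⟨c, hc, fun v hv => ?_⟩
  obtain ⟨d, hd⟩ := exists_ap_eq_of_mem_ordRealizers (mem_ordRealizers_of_ap_eq hp hc) v
  exact ⟨d, hd, c, ⟨p, hp, u, hu, c, hc, le_rfl⟩, v, hv, d, hd, le_rfl⟩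

/-- Pairs eliminate like Church pairs: `m ≤ p u v`, and `p u v k ≤ k u v` because `p` realizes
pairing. -/
theorem meetSet_subset_impSet (hmono : MonotoneAp ap) {U V Z : Set A} (hZ : IsDownset Z) :
    meetSet ap U V ⊆ impSet ap (impSet ap U (impSet ap V Z)) Z := by
  rintro m ⟨q, ⟨p, hp, u, hu, c, hc, hqc⟩, v, hv, d, hd, hmd⟩ k hk
  obtain ⟨k₁, hk₁, hk₁V⟩ := hk u hu
  obtain ⟨w, hw, hwZ⟩ := hk₁V v hv
  have hc' := mem_ordRealizers_of_ap_eq hp hc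
  obtain ⟨e, he⟩ := exists_ap_eq_of_mem_ordRealizers hc' v
  obtain ⟨w', hw', hw'w⟩ :=
    (mem_ordRealizers_of_ap_eq hc' he).2 ![k] w (by simp [pairFn, hk₁, hw])
  rw [apTuple_fin_one] at hw'
  obtain ⟨d', hd', hd'e⟩ := hmono.exists_ap_le hqc he
  rw [hd] at hd'
  cases hd'
  obtain ⟨t, ht, htw'⟩ := hmono.exists_ap_le (hmd.trans hd'e) hw'
  exact ⟨t, ht, hZ (htw'.trans hw'w) hwZ⟩

/-- The relation `U ≪ V` of the paper. -/
def Entails (ap : A → A → Option A) (φ : Set (Set A)) (U V : Set A) : Prop :=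
  impSet ap U V ∈ φ

theorem ordRealizers_pairFn_mem (hcc : CombComplete ap φ) : OrdRealizers ap (pairFn ap) ∈ φ :=
  hcc 2 _ (.app (.app (.proj 3 2) (.proj 3 0)) (.proj 3 1))

theorem impSetN_proj_mem (hmono : MonotoneAp ap) (hφ : ExternalFilter ap φ)
    (hcc : CombComplete ap φ) {n : ℕ} {Xs : Fin (n + 1) → Set A} (i : Fin (n + 1))
    (hXi : IsDownset (Xs i)) : impSetN ap Xs (Xs i) ∈ φ :=
  hφ.2.1 _ (hcc n _ (.proj (n + 1) i)) _ (isDownset_impSetN hmono Xs hXi)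
    (ordRealizers_subset_impSetN hXi fun x hx => ⟨x i, rfl, hx i⟩)

theorem entails_refl (hmono : MonotoneAp ap) (hφ : ExternalFilter ap φ)
    (hcc : CombComplete ap φ) {U : Set A} (hU : IsDownset U) : Entails ap φ U U :=
  impSetN_proj_mem (Xs := ![U]) hmono hφ hcc 0 hU

theorem Entails.trans (hmono : MonotoneAp ap) (hφ : ExternalFilter ap φ)
    (hcc : CombComplete ap φ) {U V W : Set A} (hW : IsDownset W)
    (hUV : Entails ap φ U V) (hVW : Entails ap φ V W) : Entails ap φ U W := by
  have hB := hcc 2 (fun x => (ap (x 1) (x 2)).bind (ap (x 0)))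
    (.app (.proj 3 0) (.app (.proj 3 1) (.proj 3 2)))
  refine mem_of_subset_impSetN (Xs := ![impSet ap V W, impSet ap U V]) hmono hφ
    (isDownset_impSet hmono U hW) (Fin.forall_fin_two.2 ⟨hVW, hUV⟩) hB
    (ordRealizers_subset_impSetN (Xs := ![impSet ap V W, impSet ap U V, U]) hW ?_)
  intro x hx
  obtain ⟨c, hc, hcV⟩ := hx 1 (x 2) (hx 2)
  obtain ⟨d, hd, hdW⟩ := hx 0 c hcV
  exact ⟨d, by simp [hc, hd], hdW⟩

theorem Entails.meet (hmono : MonotoneAp ap) (hφ : ExternalFilter ap φ)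
    (hcc : CombComplete ap φ) {U V W : Set A} (hWU : Entails ap φ W U)
    (hWV : Entails ap φ W V) : Entails ap φ W (meetSet ap U V) := by
  have hS := hcc 3
    (fun x => ((ap (x 1) (x 3)).bind (ap (x 0))).bind fun a => (ap (x 2) (x 3)).bind (ap a))
    (.app (.app (.proj 4 0) (.app (.proj 4 1) (.proj 4 3))) (.app (.proj 4 2) (.proj 4 3)))
  refine mem_of_subset_impSetN
    (Xs := ![OrdRealizers ap (pairFn ap), impSet ap W U, impSet ap W V]) hmono hφ
    (isDownset_impSet hmono W (isDownset_appSet _ _))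
    (Fin.forall_fin_succ.2 ⟨ordRealizers_pairFn_mem hcc, Fin.forall_fin_two.2 ⟨hWU, hWV⟩⟩) hS
    (ordRealizers_subset_impSetN
      (Xs := ![OrdRealizers ap (pairFn ap), impSet ap W U, impSet ap W V, W])
      (isDownset_appSet _ _) ?_)
  intro x hx
  obtain ⟨u, hu, huU⟩ := hx 1 (x 3) (hx 3)
  obtain ⟨v, hv, hvV⟩ := hx 2 (x 3) (hx 3)
  obtain ⟨c, hc, hcm⟩ := ordRealizers_pairFn_subset U V (hx 0) u huU
  obtain ⟨d, hd, hdm⟩ := hcm v hvV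
  exact ⟨d, by simp [hu, hv, hc, hd], hdm⟩

theorem Entails.uncurry (hmono : MonotoneAp ap) (hφ : ExternalFilter ap φ)
    (hcc : CombComplete ap φ) {U V W : Set A} (hV : IsDownset V)
    (h : Entails ap φ W (impSet ap U V)) : Entails ap φ (meetSet ap W U) V :=
  mem_of_subset_impSetN (Xs := ![impSet ap W (impSet ap U V)]) hmono hφ
    (isDownset_impSet hmono _ hV) (Fin.forall_fin_one.2 h)
    (hcc 1 (fun x => ap (x 1) (x 0)) (.app (.proj 2 1) (.proj 2 0)))
    (ordRealizers_subset_impSetN (Xs := ![impSet ap W (impSet ap U V), meetSet ap W U]) hV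
      fun _ hx => meetSet_subset_impSet hmono hV (hx 1) _ (hx 0))

theorem Entails.curry (hmono : MonotoneAp ap) (hφ : ExternalFilter ap φ)
    (hcc : CombComplete ap φ) {U V W : Set A} (hV : IsDownset V)
    (h : Entails ap φ (meetSet ap W U) V) : Entails ap φ W (impSet ap U V) := by
  have hT := hcc 3 (fun x => ((ap (x 1) (x 2)).bind fun a => ap a (x 3)).bind (ap (x 0)))
    (.app (.proj 4 0) (.app (.app (.proj 4 1) (.proj 4 2)) (.proj 4 3)))
  refine mem_of_subset_impSetN
    (Xs := ![impSet ap (meetSet ap W U) V, OrdRealizers ap (pairFn ap)]) hmono hφ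
    (isDownset_impSet hmono W (isDownset_impSet hmono U hV))
    (Fin.forall_fin_two.2 ⟨h, ordRealizers_pairFn_mem hcc⟩) hT
    (ordRealizers_subset_impSetN
      (Xs := ![impSet ap (meetSet ap W U) V, OrdRealizers ap (pairFn ap), W, U]) hV ?_)
  intro x hx
  obtain ⟨c, hc, hcm⟩ := ordRealizers_pairFn_subset W U (hx 1) (x 2) (hx 2)
  obtain ⟨d, hd, hdm⟩ := hcm (x 3) (hx 3)
  obtain ⟨e, he, heV⟩ := hx 0 d hdm
  exact ⟨e, by simp [hc, hd, he], heV⟩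

end

/-- For an order partial combinatory algebra `A` and a combinatory complete external
filter `φ`, the relation `U ≪ V ⟺ (U ⇒ V) ∈ φ` is a preorder on downsets; it has
finite meets given by pairing, and `⇒` is a Heyting implication with respect to this
meet. -/
theorem downset_preorder_heyting (ap : A → A → Option A) (hmono : MonotoneAp ap)
    (φ : Set (Set A)) (hφ : ExternalFilter ap φ) (hcc : CombComplete ap φ) :
    (∀ U : Set A, IsDownset U → impSet ap U U ∈ φ) ∧
    (∀ U V W : Set A, IsDownset U → IsDownset V → IsDownset W →
      impSet ap U V ∈ φ → impSet ap V W ∈ φ → impSet ap U W ∈ φ) ∧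
    (∀ U V : Set A, IsDownset U → IsDownset V →
      impSet ap (meetSet ap U V) U ∈ φ ∧ impSet ap (meetSet ap U V) V ∈ φ ∧
      ∀ W : Set A, IsDownset W → impSet ap W U ∈ φ → impSet ap W V ∈ φ →
        impSet ap W (meetSet ap U V) ∈ φ) ∧
    (∀ U V W : Set A, IsDownset U → IsDownset V → IsDownset W →
      (impSet ap W (impSet ap U V) ∈ φ ↔ impSet ap (meetSet ap W U) V ∈ φ)) := by
  refine ⟨fun U hU => entails_refl hmono hφ hcc hU,
    fun U V W _ _ hW => Entails.trans hmono hφ hcc hW,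
    fun U V hU hV => ⟨?_, ?_, fun W _ => Entails.meet hmono hφ hcc⟩,
    fun U V W _ hV _ => ⟨Entails.uncurry hmono hφ hcc hV, Entails.curry hmono hφ hcc hV⟩⟩
  -- The projections are the uncurried forms of `U ≪ V ⇒ U` and `U ≪ V ⇒ V`.
  · exact Entails.uncurry hmono hφ hcc hU (impSetN_proj_mem (Xs := ![U, V]) hmono hφ hcc 0 hU)
  · exact Entails.uncurry hmono hφ hcc hV (impSetN_proj_mem (Xs := ![U, V]) hmono hφ hcc 1 hV)
end

section
/- Any weakly complete internal category is weakly algebraically complete: every endofunctor F : C → C of a weakly complete internal category C has an initial Lambek algebra, constructed as the limit of the underlying-object functor U : Alg(F) → C, where the limit structure map a : F(lim U) → lim U is induced by the canonical natural transformation FU → U. -/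
/-!
The limit projections `lim U ⟶ A` are themselves algebra morphisms, so they give a morphism
out of `lim U` to every algebra. Applied to the algebra `lim U` itself, the projection is an
endomorphism of the limit compatible with all projections, hence the identity; naturality of
the limit cone along an arbitrary algebra morphism `m : lim U ⟶ A` then forces `m` to be the
projection.
-/

open CategoryTheory CategoryTheory.Limits

universe v u

variable {C : Type u} [Category.{v} C]

/-- Given an endofunctor `F` such that the forgetful functor from `F`-algebras has a
limit, the limit of the underlying-object functor carries an algebra structure, whose
structure map is induced by the canonical natural transformation `F ∘ U ⟶ U`. -/
noncomputable def limitAlgebra (F : C ⥤ C) [HasLimit (Endofunctor.Algebra.forget F)] :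
    Endofunctor.Algebra F where
  a := limit (Endofunctor.Algebra.forget F)
  str := limit.lift (Endofunctor.Algebra.forget F)
    { pt := F.obj (limit (Endofunctor.Algebra.forget F))
      π :=
        { app := fun A =>
            F.map (limit.π (Endofunctor.Algebra.forget F) A) ≫ A.str
          naturality := by
            intro A B f
            dsimp
            erw [Category.id_comp, Category.assoc, ← f.h, ← Category.assoc,
              ← F.map_comp,
              show limit.π (Endofunctor.Algebra.forget F) A ≫ f.f =
                  limit.π (Endofunctor.Algebra.forget F) B from
                limit.w (Endofunctor.Algebra.forget F) f]
            rfl } }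

namespace limitAlgebra

variable (F : C ⥤ C) [HasLimit (Endofunctor.Algebra.forget F)]

@[simp]
theorem str_π (A : Endofunctor.Algebra F) :
    (limitAlgebra F).str ≫ limit.π (Endofunctor.Algebra.forget F) A =
      F.map (limit.π (Endofunctor.Algebra.forget F) A) ≫ A.str :=
  limit.lift_π _ _

noncomputable def π (A : Endofunctor.Algebra F) : limitAlgebra F ⟶ A where
  f := limit.π (Endofunctor.Algebra.forget F) A
  h := (str_π F A).symm

theorem π_self : limit.π (Endofunctor.Algebra.forget F) (limitAlgebra F) = 𝟙 _ :=
  limit.hom_ext fun A => (limit.w _ (π F A)).trans (Category.id_comp _).symm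

theorem hom_eq_π {A : Endofunctor.Algebra F} (m : limitAlgebra F ⟶ A) : m = π F A := by
  ext
  have naturality := limit.w (Endofunctor.Algebra.forget F) m
  rw [π_self] at naturality
  exact (Category.id_comp _).symm.trans naturality

end limitAlgebra

/-- Every endofunctor of a weakly complete category has an initial Lambek algebra:
if the limit of the forgetful functor `U : Alg(F) ⥤ C` exists, then `lim U` with the
induced structure map is an initial `F`-algebra. -/
theorem limitAlgebra_isInitial (F : C ⥤ C)
    [HasLimit (Endofunctor.Algebra.forget F)] :
    Nonempty (IsInitial (limitAlgebra F)) :=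
  ⟨IsInitial.ofUniqueHom (limitAlgebra.π F) fun _ => limitAlgebra.hom_eq_π F⟩
end
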